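/- arXiv:2001.11979 — 3 statements merged into one kernel-verified Lean document; each statement's English description precedes it below -/
import Mathlib

section
/- If A is a left Leibniz algebra whose quotient Lie algebra A/Leib(A) is complete (trivial center and all derivations inner), then A is a complete Leibniz algebra: Z(A/Leib(A)) = 0 and for every derivation δ of A there exists x ∈ A with im(δ − L_x) ⊆ Leib(A). -/
section Defs
variable {F A : Type*} [Field F] [AddCommGroup A] [Module F A]

def IsLeibniz (b : A →ₗ[F] A →ₗ[F] A) : Prop :=
  ∀ x y z : A, b x (b y z) = b (b x y) z + b y (b x z)

def IsDer (b : A →ₗ[F] A →ₗ[F] A) (δ : A →ₗ[F] A) : Prop :=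
  ∀ x y : A, δ (b x y) = b (δ x) y + b x (δ y)

def Leib (b : A →ₗ[F] A →ₗ[F] A) : Submodule F A :=
  Submodule.span F {z | ∃ x : A, z = b x x}

end Defs

lemma sq_mem_Leib {F A : Type*} [Field F] [AddCommGroup A] [Module F A]
    (b : A →ₗ[F] A →ₗ[F] A) (x : A) : b x x ∈ Leib b :=
  Submodule.subset_span ⟨x, rfl⟩

lemma symm_mem_Leib {F A : Type*} [Field F] [AddCommGroup A] [Module F A]
    (b : A →ₗ[F] A →ₗ[F] A) (x y : A) : b x y + b y x ∈ Leib b := by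
  have h : b x y + b y x = b (x + y) (x + y) - b x x - b y y := by
    simp only [map_add, LinearMap.add_apply]; abel
  rw [h]
  exact sub_mem (sub_mem (sq_mem_Leib b _) (sq_mem_Leib b _)) (sq_mem_Leib b _)

lemma der_preserves_Leib {F A : Type*} [Field F] [AddCommGroup A] [Module F A]
    (b : A →ₗ[F] A →ₗ[F] A) (δ : A →ₗ[F] A) (hδ : IsDer b δ) :
    Leib b ≤ (Leib b).comap δ := by
  rw [Leib, Submodule.span_le]
  rintro _ ⟨x, rfl⟩
  show δ ((b x) x) ∈ Submodule.span F {z | ∃ x, z = (b x) x}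
  rw [hδ x x]
  exact symm_mem_Leib b (δ x) x

/-- If the quotient Lie algebra `A/Leib(A)` of a left Leibniz algebra `A` is complete
(trivial center and all derivations inner), then `A` is a complete Leibniz algebra:
`Z(A/Leib(A)) = 0` and every derivation `δ` of `A` is inner, i.e. there is `x ∈ A` with
`im(δ - L_x) ⊆ Leib(A)`. -/
theorem complete_of_quotient_complete
    {F A : Type*} [Field F] [AddCommGroup A] [Module F A]
    (b : A →ₗ[F] A →ₗ[F] A) (hb : IsLeibniz b)
    (bq : (A ⧸ Leib b) →ₗ[F] (A ⧸ Leib b) →ₗ[F] (A ⧸ Leib b))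
    (hbq : ∀ x y : A, bq ((Leib b).mkQ x) ((Leib b).mkQ y) = (Leib b).mkQ (b x y))
    (hZ : ∀ u : A ⧸ Leib b, (∀ v : A ⧸ Leib b, bq u v = 0) → u = 0)
    (hinner : ∀ D : (A ⧸ Leib b) →ₗ[F] (A ⧸ Leib b), IsDer bq D →
      ∃ u : A ⧸ Leib b, ∀ v, D v = bq u v) :
    (∀ u : A ⧸ Leib b, (∀ v : A ⧸ Leib b, bq u v = 0) → u = 0) ∧
    (∀ δ : A →ₗ[F] A, IsDer b δ → ∃ x : A, ∀ y : A, δ y - b x y ∈ Leib b) := by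
  refine ⟨hZ, fun δ hδ => ?_⟩
  set D := (Leib b).mapQ (Leib b) δ (der_preserves_Leib b δ hδ) with hD
  have hDmk : ∀ y : A, D ((Leib b).mkQ y) = (Leib b).mkQ (δ y) := fun y =>
    Submodule.mapQ_apply _ _ _ y
  have hDder : IsDer bq D := by
    intro u v
    obtain ⟨x, rfl⟩ := (Leib b).mkQ_surjective u
    obtain ⟨y, rfl⟩ := (Leib b).mkQ_surjective v
    rw [hbq, hDmk, hDmk, hDmk, hδ, map_add, hbq, hbq]
  obtain ⟨u, hu⟩ := hinner D hDder
  obtain ⟨x, rfl⟩ := (Leib b).mkQ_surjective u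
  refine ⟨x, fun y => ?_⟩
  have := hu ((Leib b).mkQ y)
  rw [hDmk, hbq] at this
  have h0 : (Leib b).mkQ (δ y - b x y) = 0 := by rw [map_sub, this, sub_self]
  rwa [Submodule.mkQ_apply, Submodule.Quotient.mk_eq_zero] at h0
end

section
/- Let A be the 4-dimensional left Leibniz algebra with basis {w, x, y, z} and nonzero products [x,x] = z, [w,x] = y, [x,w] = −y+z, [w,y] = z, [y,w] = −z. Then A is nilpotent (A⁴ = 0), Leib(A) = span{z}, and every derivation of A is inner: for every derivation δ there exists a ∈ A with im(δ − L_a) ⊆ Leib(A). -/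
section Defs
variable {F A : Type*} [Field F] [AddCommGroup A] [Module F A]

def bracketSpan (b : A →ₗ[F] A →ₗ[F] A) (S T : Submodule F A) : Submodule F A :=
  Submodule.span F {z | ∃ x ∈ S, ∃ y ∈ T, z = b x y}

/-- The lower central series `A¹ = A`, `Aⁱ⁺¹ = [A, Aⁱ]`. -/
def lcs (b : A →ₗ[F] A →ₗ[F] A) : ℕ → Submodule F A
  | 0 => ⊤
  | n + 1 => bracketSpan b ⊤ (lcs b n)

end Defs

/-- The bracket of the 4-dimensional Leibniz algebra with basis `w = e₀, x = e₁, y = e₂,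
z = e₃` and nonzero products `[x,x] = z`, `[w,x] = y`, `[x,w] = -y+z`, `[w,y] = z`,
`[y,w] = -z`. -/
def exBracket (F : Type*) [Field F] : (Fin 4 → F) →ₗ[F] (Fin 4 → F) →ₗ[F] (Fin 4 → F) :=
  LinearMap.mk₂ F
    (fun u v => ![0, 0, u 0 * v 1 - u 1 * v 0,
      u 1 * v 1 + u 1 * v 0 + u 0 * v 2 - u 2 * v 0])
    (by intro u u' v; funext j; fin_cases j <;> simp <;> ring)
    (by intro c u v; funext j; fin_cases j <;> simp <;> ring)
    (by intro u v v'; funext j; fin_cases j <;> simp <;> ring)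
    (by intro c u v; funext j; fin_cases j <;> simp <;> ring)

set_option maxHeartbeats 1600000 in
/-- The 4-dimensional algebra `A` above is a left Leibniz algebra, it is nilpotent with
`A⁴ = 0`, `Leib(A) = span{z}`, and every derivation of `A` is inner: for every derivation
`δ` there is `a ∈ A` with `im(δ - L_a) ⊆ Leib(A)`. -/
theorem example_nilpotent_all_derivations_inner (F : Type*) [Field F] :
    IsLeibniz (exBracket F) ∧
    lcs (exBracket F) 3 = ⊥ ∧
    Leib (exBracket F) = Submodule.span F {(![0, 0, 0, 1] : Fin 4 → F)} ∧
    (∀ δ : (Fin 4 → F) →ₗ[F] (Fin 4 → F), IsDer (exBracket F) δ →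
      ∃ a : Fin 4 → F, ∀ v : Fin 4 → F, δ v - exBracket F a v ∈ Leib (exBracket F)) := by
  have hLeib : Leib (exBracket F) = Submodule.span F {(![0, 0, 0, 1] : Fin 4 → F)} := by
    apply le_antisymm
    · rw [Leib, Submodule.span_le]
      rintro w ⟨x, rfl⟩
      rw [SetLike.mem_coe, Submodule.mem_span_singleton]
      refine ⟨x 1 * x 1 + x 1 * x 0, ?_⟩
      funext j; fin_cases j <;> simp [exBracket] <;> ring
    · rw [Submodule.span_le]
      rintro w rfl
      apply Submodule.subset_span
      refine ⟨![0,1,0,0], ?_⟩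
      funext j; fin_cases j <;> simp [exBracket]
  refine ⟨?_, ?_, hLeib, ?_⟩
  · intro x y z; funext j; fin_cases j <;> simp [exBracket] <;> ring
  · have h1 : lcs (exBracket F) 1 ≤
        LinearMap.ker (LinearMap.proj (R := F) (φ := fun _ : Fin 4 => F) 0) ⊓
        LinearMap.ker (LinearMap.proj 1) := by
      show bracketSpan _ ⊤ (lcs _ 0) ≤ _
      rw [bracketSpan, Submodule.span_le]
      rintro w ⟨x, -, y, -, rfl⟩
      simp [exBracket]
    have h2 : lcs (exBracket F) 2 ≤
        LinearMap.ker (LinearMap.proj (R := F) (φ := fun _ : Fin 4 => F) 0) ⊓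
        LinearMap.ker (LinearMap.proj 1) ⊓ LinearMap.ker (LinearMap.proj 2) := by
      show bracketSpan _ ⊤ (lcs _ 1) ≤ _
      rw [bracketSpan, Submodule.span_le]
      rintro w ⟨x, -, y, hy, rfl⟩
      obtain ⟨hy0, hy1⟩ := h1 hy
      simp only [SetLike.mem_coe, LinearMap.mem_ker, LinearMap.proj_apply] at hy0 hy1
      simp [exBracket, hy0, hy1]
    rw [eq_bot_iff]
    show bracketSpan _ ⊤ (lcs _ 2) ≤ _
    rw [bracketSpan, Submodule.span_le]
    rintro w ⟨x, -, y, hy, rfl⟩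
    obtain ⟨⟨hy0, hy1⟩, hy2⟩ := h2 hy
    simp only [SetLike.mem_coe, LinearMap.mem_ker, LinearMap.proj_apply] at hy0 hy1 hy2
    simp only [SetLike.mem_coe, Submodule.mem_bot]
    funext j; fin_cases j <;> simp [exBracket, hy0, hy1, hy2]
  · intro δ hδ
    set e0 : Fin 4 → F := ![1,0,0,0] with he0
    set e1 : Fin 4 → F := ![0,1,0,0] with he1
    set e2 : Fin 4 → F := ![0,0,1,0] with he2
    set e3 : Fin 4 → F := ![0,0,0,1] with he3
    have hb00 : exBracket F e0 e0 = 0 := by funext j; fin_cases j <;> simp [exBracket, he0]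
    have hb01 : exBracket F e0 e1 = e2 := by
      funext j; fin_cases j <;> simp [exBracket, he0, he1, he2]
    have hb11 : exBracket F e1 e1 = e3 := by
      funext j; fin_cases j <;> simp [exBracket, he1, he3]
    have hb10 : exBracket F e1 e0 = e3 - e2 := by
      funext j; fin_cases j <;> simp [exBracket, he0, he1, he2, he3]
    have hb02 : exBracket F e0 e2 = e3 := by
      funext j; fin_cases j <;> simp [exBracket, he0, he2, he3]
    have hb21 : exBracket F e2 e1 = 0 := by
      funext j; fin_cases j <;> simp [exBracket, he1, he2]
    have q00 := hδ e0 e0; rw [hb00, map_zero] at q00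
    have q01 := hδ e0 e1; rw [hb01] at q01
    have q11 := hδ e1 e1; rw [hb11] at q11
    have q10 := hδ e1 e0; rw [hb10, map_sub] at q10
    have q02 := hδ e0 e2; rw [hb02] at q02
    have q21 := hδ e2 e1; rw [hb21, map_zero] at q21
    have r1 := congrFun q00 3
    have r2 := congrFun q01 0
    have r3 := congrFun q01 1
    have r4 := congrFun q01 2
    have r5 := congrFun q01 3
    have r6 := congrFun q11 0
    have r7 := congrFun q11 1
    have r8 := congrFun q11 2
    have r9 := congrFun q11 3
    have r10 := congrFun q10 3
    have r11 := congrFun q02 3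
    have r12 := congrFun q21 3
    simp [exBracket, he0, he1, he2, he3] at r1 r2 r3 r4 r5 r6 r7 r8 r9 r10 r11 r12
    have hD10 : δ ![0,1,0,0] 0 = 0 := by linear_combination r3 + r12
    have hD00 : δ ![1,0,0,0] 0 = 0 := by
      linear_combination r10 + r5 - 2*r1 - r11 - r4
    have hD11 : δ ![0,1,0,0] 1 = 0 := by
      linear_combination hD00 - r9 + r10 + r5 - 2*r1 - hD10
    have hD22 : δ ![0,0,1,0] 2 = 0 := by linear_combination r4 + hD00 + hD11
    have hD01 : δ ![1,0,0,0] 1 = 0 := by linear_combination -r1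
    refine ⟨![δ ![0,1,0,0] 2, -(δ ![1,0,0,0] 2), 0, 0], fun v => ?_⟩
    rw [hLeib, Submodule.mem_span_singleton]
    refine ⟨δ v 3 - exBracket F ![δ ![0,1,0,0] 2, -(δ ![1,0,0,0] 2), 0, 0] v 3, ?_⟩
    have hv : δ v = v 0 • δ ![1,0,0,0] + v 1 • δ ![0,1,0,0] + v 2 • δ ![0,0,1,0]
        + v 3 • δ ![0,0,0,1] := by
      have hvdec : v = v 0 • e0 + v 1 • e1 + v 2 • e2 + v 3 • e3 := by
        funext j; fin_cases j <;> simp [he0, he1, he2, he3]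
      conv_lhs => rw [hvdec]
      simp only [map_add, map_smul, he0, he1, he2, he3]
    funext j
    fin_cases j <;>
      simp [exBracket, hv, he0, he1, he2, he3, hD00, hD01, hD10, hD11, hD22, r2, r3, r6, r7, r8] <;> ring
end

section
/- Let A be a left Leibniz algebra such that hol(A) = A + (Z^l_{hol(A)}(A) ⊕ I), where I = {δ ∈ Der(A) : im(δ) ⊆ Leib(A)}. Then every derivation of A is inner: for each δ ∈ Der(A) there exists x ∈ A with im(δ − L_x) ⊆ Leib(A). -/
section Defs
variable {F A : Type*} [Field F] [AddCommGroup A] [Module F A]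

/-- `Der(A)`: the derivations of `(A, b)`, as a submodule of `End(A)`. -/
def DerSub (b : A →ₗ[F] A →ₗ[F] A) : Submodule F (A →ₗ[F] A) where
  carrier := {δ | IsDer b δ}
  add_mem' := by
    intro f g hf hg x y
    simp only [LinearMap.add_apply, hf x y, hg x y, map_add, LinearMap.add_apply]
    abel
  zero_mem' := by intro x y; simp
  smul_mem' := by
    intro c f hf x y
    simp only [LinearMap.smul_apply, hf x y, map_smul, smul_add, LinearMap.smul_apply]

lemma leftMul_mem_DerSub {b : A →ₗ[F] A →ₗ[F] A} (hb : IsLeibniz b) (a : A) :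
    b a ∈ DerSub b :=
  fun x y => hb a x y

lemma comm_mem_DerSub {b : A →ₗ[F] A →ₗ[F] A} {f g : A →ₗ[F] A}
    (hf : f ∈ DerSub b) (hg : g ∈ DerSub b) : f ∘ₗ g - g ∘ₗ f ∈ DerSub b := by
  have hf' : ∀ x y : A, f (b x y) = b (f x) y + b x (f y) := hf
  have hg' : ∀ x y : A, g (b x y) = b (g x) y + b x (g y) := hg
  intro x y
  simp only [LinearMap.sub_apply, LinearMap.comp_apply, hf', hg', map_add, map_sub,
    LinearMap.sub_apply, LinearMap.add_apply]
  abel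

/-- The holomorph `hol(A) = A ⊕ Der(A)` with bracket
`[x+δ₁, y+δ₂] = [x,y] + δ₁(y) + [L_x, δ₂] + [δ₁, δ₂]`, where `[L_x, δ₂] = L_{-δ₂(x)}`. -/
def holB (b : A →ₗ[F] A →ₗ[F] A) (hb : IsLeibniz b) :
    A × DerSub b → A × DerSub b → A × DerSub b :=
  fun u v =>
    (b u.1 v.1 + (u.2 : A →ₗ[F] A) v.1,
     ⟨-(b ((v.2 : A →ₗ[F] A) u.1)) +
        ((u.2 : A →ₗ[F] A) ∘ₗ (v.2 : A →ₗ[F] A) - (v.2 : A →ₗ[F] A) ∘ₗ (u.2 : A →ₗ[F] A)),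
      add_mem (neg_mem (leftMul_mem_DerSub hb _)) (comm_mem_DerSub u.2.2 v.2.2)⟩)

end Defs

/-- If for a left Leibniz algebra `A` the holomorph decomposes as
`hol(A) = A + (Z^l_{hol(A)}(A) ⊕ I)`, where `I = {δ ∈ Der(A) : im(δ) ⊆ Leib(A)}`, then
every derivation of `A` is inner: for each derivation `δ` there is `x ∈ A` with
`im(δ - L_x) ⊆ Leib(A)`. -/
theorem derivations_inner_of_holomorph_decomposition
    {F A : Type*} [Field F] [AddCommGroup A] [Module F A]
    (b : A →ₗ[F] A →ₗ[F] A) (hb : IsLeibniz b)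
    (hdecomp : ∀ u : A × DerSub b,
      ∃ a ∈ {w : A × DerSub b | w.2 = 0},
      ∃ z ∈ {w : A × DerSub b | ∀ c : A, holB b hb w (c, 0) = 0},
      ∃ i ∈ {w : A × DerSub b | w.1 = 0 ∧ ∀ y : A, (w.2 : A →ₗ[F] A) y ∈ Leib b},
        u = a + z + i) :
    ∀ δ : A →ₗ[F] A, IsDer b δ → ∃ x : A, ∀ y : A, δ y - b x y ∈ Leib b := by
  intro δ hδ
  obtain ⟨a, ha, z, hz, i, ⟨hi1, hi2⟩, heq⟩ := hdecomp (0, ⟨δ, hδ⟩)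
  refine ⟨-z.1, fun y => ?_⟩
  have h2 : δ = (a.2 : A →ₗ[F] A) + z.2 + i.2 := by
    have := congrArg (fun w => ((w.2 : DerSub b) : A →ₗ[F] A)) heq
    simpa using this
  have hz' : ∀ c : A, b z.1 c + (z.2 : A →ₗ[F] A) c = 0 := fun c =>
    congrArg Prod.fst (hz c)
  have ha' : (a.2 : A →ₗ[F] A) = 0 := by
    simpa using congrArg (fun w : DerSub b => (w : A →ₗ[F] A)) ha
  have : δ y = (z.2 : A →ₗ[F] A) y + (i.2 : A →ₗ[F] A) y := by
    rw [h2, ha']; simp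
  rw [this]
  have hzy : (z.2 : A →ₗ[F] A) y = - b z.1 y := by
    exact eq_neg_of_add_eq_zero_right (hz' y)
  rw [hzy]
  simpa using hi2 y
end
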